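/- Let α > 0. Then H_α satisfies the differential equation H_α′(z) = α + z + (z⁻¹ − 1) H_α(z) for all z ∈ ℂ∖[0,∞). -/

import Mathlib

/-!
Write `I = ∫₀^∞ t e^{-t}/(z-t) dt`, `J = ∫₀^∞ e^{-t}/(z-t) dt` and `K = ∫₀^∞ t e^{-t}/(z-t)² dt`.
Off `[0,∞)` the distance from `z` to the half-line is positive, which dominates the integrands
uniformly near `z`, so one may differentiate under the integral sign: `H_α' = 1 - αK`.
Splitting `t = z - (z - t)` gives `I = zJ - 1`, and integrating
`d/dt [t e^{-t}/(z-t)] = (1-t) e^{-t}/(z-t) + t e^{-t}/(z-t)²` over `(0,∞)`, where both boundary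
terms vanish, gives `K = I - J`. Substituting both into `H_α = z + α + αI` yields the equation.
-/

open MeasureTheory Set Filter

/-- `F(x+iy) = ∫₀^∞ t e^{-t}/((x-t)² + y²) dt`. -/
noncomputable def Fint (x y : ℝ) : ℝ :=
  ∫ t in Set.Ioi (0:ℝ), t * Real.exp (-t) / ((x - t)^2 + y^2)

/-- `H_α(z) = z + α + α ∫₀^∞ t e^{-t}/(z-t) dt`. -/
noncomputable def Hfun (α : ℝ) (z : ℂ) : ℂ :=
  z + (α : ℂ) + (α : ℂ) * ∫ t in Set.Ioi (0:ℝ), ((t * Real.exp (-t) : ℝ) : ℂ) / (z - (t : ℂ))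

open Topology

lemma integrableOn_mul_exp_neg_Ioi : IntegrableOn (fun t : ℝ => t * Real.exp (-t)) (Ioi 0) :=
  (Real.GammaIntegral_convergent two_pos).congr_fun (fun t _ => by norm_num [mul_comm])
    measurableSet_Ioi

lemma exists_pos_le_norm_sub_ofReal {z : ℂ} (hz : z.im ≠ 0 ∨ z.re < 0) :
    ∃ c > 0, ∀ t : ℝ, 0 ≤ t → c ≤ ‖z - t‖ := by
  rcases hz with him | hre
  · refine ⟨|z.im|, abs_pos.mpr him, fun t _ => ?_⟩
    simpa using Complex.abs_im_le_norm (z - t)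
  · refine ⟨-z.re, neg_pos.mpr hre, fun t ht => ?_⟩
    have := Complex.abs_re_le_norm (z - t)
    rw [Complex.sub_re, Complex.ofReal_re] at this
    linarith [neg_abs_le (z.re - t)]

lemma ae_restrict_Ioi_le_norm_sub {z : ℂ} {c : ℝ} (h : ∀ t : ℝ, 0 ≤ t → c ≤ ‖z - t‖) :
    ∀ᵐ t : ℝ ∂(volume.restrict (Ioi 0)), c ≤ ‖z - t‖ :=
  ae_restrict_of_forall_mem measurableSet_Ioi fun t ht => h t ht.le

lemma le_norm_sub_of_mem_ball {E : Type*} [SeminormedAddCommGroup E] {z x w : E} {c : ℝ}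
    (hw : c ≤ ‖z - w‖) (hx : x ∈ Metric.ball z (c / 2)) : c / 2 ≤ ‖x - w‖ := by
  rw [mem_ball_iff_norm'] at hx
  linarith [norm_sub_le_norm_sub_add_norm_sub z x w]

lemma norm_div_pow_le_of_le_norm {𝕜 : Type*} [NormedDivisionRing 𝕜] {a b : 𝕜} {c : ℝ}
    (hc : 0 < c) (hb : c ≤ ‖b‖) (p : ℕ) : ‖a / b ^ p‖ ≤ ‖a‖ / c ^ p := by
  rw [norm_div, norm_pow]
  gcongr

section CauchyTransform

variable {μ : Measure ℝ} {g : ℝ → ℂ} {z : ℂ} {c : ℝ}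

lemma aestronglyMeasurable_div_sub_ofReal_pow (hg : AEStronglyMeasurable g μ) (z : ℂ) (p : ℕ) :
    AEStronglyMeasurable (fun t => g t / (z - t) ^ p) μ := by
  simp_rw [div_eq_mul_inv]
  exact hg.mul (by fun_prop : Measurable fun t : ℝ => ((z - t) ^ p)⁻¹).aestronglyMeasurable

lemma integrable_div_sub_ofReal_pow (hg : Integrable g μ) (hc : 0 < c)
    (hz : ∀ᵐ t : ℝ ∂μ, c ≤ ‖z - t‖) (p : ℕ) :
    Integrable (fun t => g t / (z - t) ^ p) μ :=
  hg.norm.div_const (c ^ p) |>.mono' (aestronglyMeasurable_div_sub_ofReal_pow hg.1 z p)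
    (hz.mono fun t ht => norm_div_pow_le_of_le_norm (a := g t) hc ht p)

lemma hasDerivAt_div_sub {x w : ℂ} (hx : x - w ≠ 0) (a : ℂ) :
    HasDerivAt (fun y : ℂ => a / (y - w)) (-(a / (x - w) ^ 2)) x := by
  refine ((((hasDerivAt_id x).sub_const w).inv hx).const_mul a).congr_deriv ?_
  simp only [id]
  ring

lemma hasDerivAt_integral_div_sub_ofReal (hg : Integrable g μ) (hc : 0 < c)
    (hz : ∀ᵐ t : ℝ ∂μ, c ≤ ‖z - t‖) :
    HasDerivAt (fun x => ∫ t, g t / (x - t) ∂μ) (-∫ t, g t / (z - t) ^ 2 ∂μ) z := by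
  have hc2 : 0 < c / 2 := half_pos hc
  have hball : ∀ᵐ t : ℝ ∂μ, ∀ x ∈ Metric.ball z (c / 2), c / 2 ≤ ‖x - t‖ :=
    hz.mono fun t ht x hx => le_norm_sub_of_mem_ball ht hx
  rw [← integral_neg]
  refine (hasDerivAt_integral_of_dominated_loc_of_deriv_le
    (F' := fun x t => -(g t / (x - t) ^ 2)) (bound := fun t => ‖g t‖ / (c / 2) ^ 2)
    (Metric.ball_mem_nhds z hc2) ?_ ?_ ?_ ?_ (hg.norm.div_const _) ?_).2
  · exact Eventually.of_forall fun x => by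
      simpa using aestronglyMeasurable_div_sub_ofReal_pow hg.1 x 1
  · simpa using integrable_div_sub_ofReal_pow hg hc hz 1
  · exact (aestronglyMeasurable_div_sub_ofReal_pow hg.1 z 2).neg
  · exact hball.mono fun t ht x hx => by
      rw [norm_neg]
      exact norm_div_pow_le_of_le_norm hc2 (ht x hx) 2
  · exact hball.mono fun t ht x hx =>
      hasDerivAt_div_sub (norm_pos_iff.mp (hc2.trans_le (ht x hx))) (g t)

end CauchyTransform

lemma integral_Ioi_div_sub_ofReal_sq {f f' : ℝ → ℂ} {z : ℂ} {c : ℝ}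
    (hf : ∀ t ∈ Ici (0 : ℝ), HasDerivAt f (f' t) t) (hf_top : Tendsto f atTop (𝓝 0))
    (hf_int : IntegrableOn f (Ioi 0)) (hf'_int : IntegrableOn f' (Ioi 0)) (hc : 0 < c)
    (hz : ∀ t : ℝ, 0 ≤ t → c ≤ ‖z - t‖) :
    ∫ t in Ioi 0, f t / (z - t) ^ 2 = -(∫ t in Ioi 0, f' t / (z - t)) - f 0 / z := by
  have hz' := ae_restrict_Ioi_le_norm_sub hz
  have h1 := integrable_div_sub_ofReal_pow hf'_int hc hz' 1
  have h2 := integrable_div_sub_ofReal_pow hf_int hc hz' 2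
  simp only [pow_one] at h1
  have hderiv : ∀ t ∈ Ici (0 : ℝ), HasDerivAt (fun s => f s / (z - s))
      (f' t / (z - t) + f t / (z - t) ^ 2) t := by
    intro t ht
    have hne : z - t ≠ 0 := norm_pos_iff.mp (hc.trans_le (hz t ht))
    refine ((hf t ht).div ((hasDerivAt_id (t : ℂ)).comp_ofReal.const_sub z) hne).congr_deriv ?_
    simp only [id]
    field_simp
    ring
  have htop : Tendsto (fun s => f s / (z - s)) atTop (𝓝 0) := by
    refine squeeze_zero_norm' ?_ (by simpa using hf_top.norm.div_const c)
    filter_upwards [eventually_ge_atTop 0] with s hs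
    simpa using norm_div_pow_le_of_le_norm (a := f s) hc (hz s hs) 1
  have hFTC := integral_Ioi_of_hasDerivAt_of_tendsto' hderiv (h1.add h2) htop
  rw [integral_add h1 h2] at hFTC
  simp only [Complex.ofReal_zero, sub_zero, zero_sub] at hFTC
  linear_combination hFTC

lemma hasDerivAt_mul_exp_neg (t : ℝ) :
    HasDerivAt (fun s : ℝ => s * Real.exp (-s)) ((1 - t) * Real.exp (-t)) t := by
  refine ((hasDerivAt_id t).mul (hasDerivAt_neg t).exp).congr_deriv ?_
  simp only [id]
  ring

section SlitPlane

variable {z : ℂ} (hz : z.im ≠ 0 ∨ z.re < 0)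
include hz

lemma integral_mul_exp_neg_div_sub_ofReal :
    ∫ t in Ioi (0 : ℝ), ((t * Real.exp (-t) : ℝ) : ℂ) / (z - t)
      = z * (∫ t in Ioi (0 : ℝ), ((Real.exp (-t) : ℝ) : ℂ) / (z - t)) - 1 := by
  obtain ⟨c, hc, hzc⟩ := exists_pos_le_norm_sub_ofReal hz
  have hz' := ae_restrict_Ioi_le_norm_sub hzc
  have he : IntegrableOn (fun t : ℝ => ((Real.exp (-t) : ℝ) : ℂ)) (Ioi 0) :=
    (integrableOn_exp_neg_Ioi 0).ofReal
  have hej := integrable_div_sub_ofReal_pow he hc hz' 1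
  simp only [pow_one] at hej
  have hsplit : ∀ t ∈ Ioi (0 : ℝ), ((t * Real.exp (-t) : ℝ) : ℂ) / (z - t)
      = z * (((Real.exp (-t) : ℝ) : ℂ) / (z - t)) - ((Real.exp (-t) : ℝ) : ℂ) := by
    intro t ht
    have hne : z - t ≠ 0 := norm_pos_iff.mp (hc.trans_le (hzc t (le_of_lt ht)))
    field_simp
    push_cast
    ring
  rw [setIntegral_congr_fun measurableSet_Ioi hsplit, integral_sub (hej.const_mul z) he,
    integral_const_mul, integral_complex_ofReal, integral_exp_neg_Ioi_zero, Complex.ofReal_one]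

lemma integral_mul_exp_neg_div_sub_ofReal_sq :
    ∫ t in Ioi (0 : ℝ), ((t * Real.exp (-t) : ℝ) : ℂ) / (z - t) ^ 2
      = (∫ t in Ioi (0 : ℝ), ((t * Real.exp (-t) : ℝ) : ℂ) / (z - t))
        - ∫ t in Ioi (0 : ℝ), ((Real.exp (-t) : ℝ) : ℂ) / (z - t) := by
  obtain ⟨c, hc, hzc⟩ := exists_pos_le_norm_sub_ofReal hz
  have hz' := ae_restrict_Ioi_le_norm_sub hzc
  set w : ℝ → ℂ := fun t => ((t * Real.exp (-t) : ℝ) : ℂ)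
  set e : ℝ → ℂ := fun t => ((Real.exp (-t) : ℝ) : ℂ)
  have hw : IntegrableOn w (Ioi 0) := integrableOn_mul_exp_neg_Ioi.ofReal
  have he : IntegrableOn e (Ioi 0) := (integrableOn_exp_neg_Ioi 0).ofReal
  have hwj := integrable_div_sub_ofReal_pow hw hc hz' 1
  have hej := integrable_div_sub_ofReal_pow he hc hz' 1
  simp only [pow_one] at hwj hej
  have hw' : ∀ t ∈ Ici (0 : ℝ), HasDerivAt w (e t - w t) t := fun t _ => by
    refine (hasDerivAt_mul_exp_neg t).ofReal_comp.congr_deriv ?_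
    rw [sub_mul, one_mul, Complex.ofReal_sub]
  have hw_top : Tendsto w atTop (𝓝 0) := by
    rw [← Complex.ofReal_zero]
    exact (Complex.continuous_ofReal.tendsto 0).comp
      (by simpa using Real.tendsto_pow_mul_exp_neg_atTop_nhds_zero 1)
  rw [integral_Ioi_div_sub_ofReal_sq hw' hw_top hw (he.sub hw) hc hzc]
  simp only [sub_div]
  rw [integral_sub hej hwj]
  simp only [w, zero_mul, Complex.ofReal_zero, zero_div, sub_zero]
  ring

lemma hasDerivAt_Hfun (α : ℝ) :
    HasDerivAt (Hfun α)
      (1 - α * ∫ t in Ioi (0 : ℝ), ((t * Real.exp (-t) : ℝ) : ℂ) / (z - t) ^ 2) z := by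
  obtain ⟨c, hc, hzc⟩ := exists_pos_le_norm_sub_ofReal hz
  have hz' := ae_restrict_Ioi_le_norm_sub hzc
  refine (((hasDerivAt_id z).add_const (α : ℂ)).add
    ((hasDerivAt_integral_div_sub_ofReal (g := fun t => ((t * Real.exp (-t) : ℝ) : ℂ))
      integrableOn_mul_exp_neg_Ioi.ofReal hc hz').const_mul
      (α : ℂ))).congr_deriv ?_
  ring

end SlitPlane

theorem free_gamma_H_differential_equation_general
    (α : ℝ) :
    ∀ z : ℂ, (z.im ≠ 0 ∨ z.re < 0) →
      deriv (Hfun α) z = (α : ℂ) + z + (z⁻¹ - 1) * Hfun α z := by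
  intro z hz
  have hz0 : z ≠ 0 := by
    rintro rfl
    simp at hz
  rw [(hasDerivAt_Hfun hz α).deriv, integral_mul_exp_neg_div_sub_ofReal_sq hz, Hfun,
    integral_mul_exp_neg_div_sub_ofReal hz]
  field_simp
  ring

/-- `H_α′(z) = α + z + (z⁻¹ − 1) H_α(z)` for all `z ∈ ℂ∖[0,∞)`. -/
theorem free_gamma_H_differential_equation
    (α : ℝ) (hα : 0 < α) :
    ∀ z : ℂ, (z.im ≠ 0 ∨ z.re < 0) →
      deriv (Hfun α) z = (α : ℂ) + z + (z⁻¹ - 1) * Hfun α z :=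
  free_gamma_H_differential_equation_general α
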